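/- Let X be a smooth projective surface, F a line bundle on X, and E a locally free sheaf with a resolution 0 → U → V → E → 0 where U = ⊕_{i≤j} A_i^{a_i} and V = ⊕_{i>j} A_i^{a_i}. Assume Ext¹(A_i, A_s ⊗ F⁻¹) = 0 for all i ≤ j < s ≤ m and Ext²(A_i, A_s ⊗ F⁻¹) = 0 for all j < i, s ≤ m. Then Ext²(E, E ⊗ F⁻¹) = 0, i.e., E is F-prioritary. -/

import Mathlib

/-!
Filtering `Ext` through the resolution: by additivity, `Ext¹(U, V ⊗ F⁻¹)` and `Ext²(V, V ⊗ F⁻¹)`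
vanish summand by summand. The contravariant long exact sequence of `0 → U → V → E → 0`,
`Ext¹(U, V ⊗ F⁻¹) → Ext²(E, V ⊗ F⁻¹) → Ext²(V, V ⊗ F⁻¹)`, then kills `Ext²(E, V ⊗ F⁻¹)`, and the
covariant one of its twist, `Ext²(E, V ⊗ F⁻¹) → Ext²(E, E ⊗ F⁻¹) → Ext³(E, U ⊗ F⁻¹) = 0`,
kills `Ext²(E, E ⊗ F⁻¹)`.
-/

open CategoryTheory CategoryTheory.Limits CategoryTheory.Abelian

universe w v u

namespace CategoryTheory.Abelian.Ext

variable {C : Type u} [Category.{v} C] [Abelian C] [HasExt.{w} C]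

lemma subsingleton_of_isBilimit_left {J : Type*} [Fintype J] {X : J → C} {c : Limits.Bicone X}
    (hc : c.IsBilimit) (Y : C) (n : ℕ) (h : ∀ i, Subsingleton (Ext.{w} (X i) Y n)) :
    Subsingleton (Ext.{w} c.pt Y n) :=
  (biproductAddEquiv hc Y n).toEquiv.subsingleton

lemma subsingleton_of_isBilimit_right (X : C) {J : Type*} [Fintype J] {Y : J → C}
    {c : Limits.Bicone Y} (hc : c.IsBilimit) (n : ℕ) (h : ∀ i, Subsingleton (Ext.{w} X (Y i) n)) :
    Subsingleton (Ext.{w} X c.pt n) :=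
  (addEquivBiproduct X hc n).toEquiv.subsingleton

lemma subsingleton_of_shortExact_left {S : ShortComplex C} (hS : S.ShortExact) (Y : C)
    {n₀ n₁ : ℕ} (hn : 1 + n₀ = n₁) (h₁ : Subsingleton (Ext.{w} S.X₁ Y n₀))
    (h₂ : Subsingleton (Ext.{w} S.X₂ Y n₁)) :
    Subsingleton (Ext.{w} S.X₃ Y n₁) := by
  refine subsingleton_of_forall_eq 0 fun x₃ => ?_
  obtain ⟨x₁, rfl⟩ := contravariant_sequence_exact₃ hS Y x₃ (Subsingleton.elim _ _) hn
  rw [Subsingleton.elim x₁ 0, comp_zero]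

lemma subsingleton_of_shortExact_right (X : C) {S : ShortComplex C} (hS : S.ShortExact)
    {n₀ n₁ : ℕ} (hn : n₀ + 1 = n₁) (h₁ : Subsingleton (Ext.{w} X S.X₁ n₁))
    (h₂ : Subsingleton (Ext.{w} X S.X₂ n₀)) :
    Subsingleton (Ext.{w} X S.X₃ n₀) := by
  refine subsingleton_of_forall_eq 0 fun x₃ => ?_
  obtain ⟨x₂, rfl⟩ := covariant_sequence_exact₃ X hS x₃ hn (Subsingleton.elim _ _)
  rw [Subsingleton.elim x₂ 0, zero_comp]

lemma subsingleton_biproduct_pow_left [HasFiniteBiproducts C] {ι : Type*} [Fintype ι] (A : ι → C) (a : ι → ℕ)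
    (Y : C) (n : ℕ)
    (h : ∀ i, Subsingleton (Ext.{w} (A i) Y n)) :
    Subsingleton (Ext.{w} (⨁ fun i => ⨁ fun _ : Fin (a i) => A i) Y n) :=
  subsingleton_of_isBilimit_left (biproduct.isBilimit _) Y n fun i =>
    subsingleton_of_isBilimit_left (biproduct.isBilimit fun _ : Fin (a i) => A i) Y n
      fun _ => h i

lemma subsingleton_map_biproduct_pow_right {D : Type*} [Category D] [Preadditive D]
    [HasFiniteBiproducts D] {ι : Type} [Fintype ι] (A : ι → D) (a : ι → ℕ)
    (T : D ⥤ C) [T.Additive] (X : C) (n : ℕ)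
    (h : ∀ i, Subsingleton (Ext.{w} X (T.obj (A i)) n)) :
    Subsingleton (Ext.{w} X (T.obj (⨁ fun i => ⨁ fun _ : Fin (a i) => A i)) n) :=
  subsingleton_of_isBilimit_right X (isBilimitOfPreserves T (biproduct.isBilimit _)) n fun i =>
    subsingleton_of_isBilimit_right X
      (isBilimitOfPreserves T (biproduct.isBilimit fun _ : Fin (a i) => A i)) n fun _ => h i

end CategoryTheory.Abelian.Ext

open CategoryTheory.Abelian.Ext in
theorem prioritary_of_resolution_general
    {C : Type u} [Category.{v} C] [Abelian C] [HasFiniteBiproducts C] [HasExt.{w} C]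
    (m j : ℕ) (A : Fin m → C)
    (T : C ⥤ C) [T.Additive]        -- T = (− ⊗ F⁻¹), the twist by F⁻¹
    (a : Fin m → ℕ) (E : C)
    -- the resolution 0 → U → V → E → 0
    (f : (⨁ fun p : {i : Fin m // i.val < j} => ⨁ fun _ : Fin (a p.1) => A p.1) ⟶
         (⨁ fun p : {i : Fin m // j ≤ i.val} => ⨁ fun _ : Fin (a p.1) => A p.1))
    (g : (⨁ fun p : {i : Fin m // j ≤ i.val} => ⨁ fun _ : Fin (a p.1) => A p.1) ⟶ E)
    (wfg : f ≫ g = 0)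
    (hse : (ShortComplex.mk f g wfg).ShortExact)
    -- tensoring with the line bundle F⁻¹ is exact
    (hse' : ((ShortComplex.mk f g wfg).map T).ShortExact)
    -- Ext¹(A_i, A_s ⊗ F⁻¹) = 0 for i ≤ j < s
    (h1 : ∀ i s : Fin m, i.val < j → j ≤ s.val →
      Subsingleton (Ext (A i) (T.obj (A s)) 1))
    -- Ext²(A_i, A_s ⊗ F⁻¹) = 0 for j < i, s
    (h2 : ∀ i s : Fin m, j ≤ i.val → j ≤ s.val →
      Subsingleton (Ext (A i) (T.obj (A s)) 2))
    -- X is a surface: Ext³ vanishes identically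
    (hdim3 : ∀ X Y : C, Subsingleton (Ext X Y 3)) :
    Subsingleton (Ext E (T.obj E) 2) := by
  have hUV := subsingleton_biproduct_pow_left _ (fun p : {i : Fin m // i.val < j} => a p.1) _ 1
    fun p => subsingleton_map_biproduct_pow_right (fun s : {i : Fin m // j ≤ i.val} => A s.1)
      (fun s => a s.1) T _ 1 fun s => h1 p.1 s.1 p.2 s.2
  have hVV := subsingleton_biproduct_pow_left _ (fun p : {i : Fin m // j ≤ i.val} => a p.1) _ 2
    fun p => subsingleton_map_biproduct_pow_right (fun s : {i : Fin m // j ≤ i.val} => A s.1)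
      (fun s => a s.1) T _ 2 fun s => h2 p.1 s.1 p.2 s.2
  have hEV := subsingleton_of_shortExact_left hse _ rfl hUV hVV
  exact subsingleton_of_shortExact_right E hse' rfl (hdim3 _ _) hEV

theorem prioritary_of_resolution
    {C : Type u} [Category.{v} C] [Abelian C] [HasFiniteBiproducts C] [HasExt.{w} C]
    (m j : ℕ) (hj : j ≤ m) (A : Fin m → C)
    (T : C ⥤ C) [T.Additive]        -- T = (− ⊗ F⁻¹), the twist by F⁻¹
    (a : Fin m → ℕ) (E : C)
    -- the resolution 0 → U → V → E → 0
    (f : (⨁ fun p : {i : Fin m // i.val < j} => ⨁ fun _ : Fin (a p.1) => A p.1) ⟶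
         (⨁ fun p : {i : Fin m // j ≤ i.val} => ⨁ fun _ : Fin (a p.1) => A p.1))
    (g : (⨁ fun p : {i : Fin m // j ≤ i.val} => ⨁ fun _ : Fin (a p.1) => A p.1) ⟶ E)
    (wfg : f ≫ g = 0)
    (hse : (ShortComplex.mk f g wfg).ShortExact)
    -- tensoring with the line bundle F⁻¹ is exact
    (hse' : ((ShortComplex.mk f g wfg).map T).ShortExact)
    -- Ext¹(A_i, A_s ⊗ F⁻¹) = 0 for i ≤ j < s
    (h1 : ∀ i s : Fin m, i.val < j → j ≤ s.val →
      Subsingleton (Ext (A i) (T.obj (A s)) 1))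
    -- Ext²(A_i, A_s ⊗ F⁻¹) = 0 for j < i, s
    (h2 : ∀ i s : Fin m, j ≤ i.val → j ≤ s.val →
      Subsingleton (Ext (A i) (T.obj (A s)) 2))
    -- X is a surface: Ext³ vanishes identically
    (hdim3 : ∀ X Y : C, Subsingleton (Ext X Y 3)) :
    Subsingleton (Ext E (T.obj E) 2) :=
  prioritary_of_resolution_general m j A T a E f g wfg hse hse' h1 h2 hdim3
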